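/- arXiv:math/0604509 — 2 statements merged into one kernel-verified Lean document; each statement's English description precedes it below -/
import Mathlib

section
/- Let D ⊂⊂ ℂⁿ be a bounded domain and X ⊆ D a subdomain that is Lipschitz in D, i.e., μ_D(X) := sup{κ_D(z;v)/κ_X(z;v) : z ∈ X, v ∈ T_z X \ {0}} < 1, where κ denotes the Kobayashi infinitesimal metric. Then X is degenerate in D: every limit of every iterated function system {f_j ∘ ⋯ ∘ f_1} with f_j : D → X holomorphic is constant. -/
open Metric Set Filter
open scoped ENNReal NNReal

noncomputable section

/-- The open unit disc in `ℂ`. -/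
def uDisc : Set ℂ := Metric.ball 0 1

/-- The inverse hyperbolic tangent. -/
def artanh (x : ℝ) : ℝ := Real.log ((1 + x) / (1 - x)) / 2

/-- The Poincaré (hyperbolic) distance on the unit disc. -/
def pDist (ζ η : ℂ) : ℝ :=
  artanh ‖(ζ - η) / (1 - (starRingEnd ℂ) ζ * η)‖

/-- Hyperbolic ball in the unit disc. -/
def hBall (z : ℂ) (r : ℝ) : Set ℂ := {w ∈ uDisc | pDist w z < r}

/-- Bloch radius of a subset of the unit disc. -/
def blochRadiusD (U : Set ℂ) : ℝ≥0∞ :=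
  ⨆ (r : NNReal) (_ : ∃ z ∈ uDisc, hBall z (r : ℝ) ⊆ U), (r : ℝ≥0∞)

/-- `tanh` extended to `ℝ≥0∞`, with `tanh ∞ = 1`. -/
def tanhE (x : ℝ≥0∞) : ℝ := if x = ⊤ then 1 else Real.tanh x.toReal

variable {E : Type*} [NormedAddCommGroup E] [NormedSpace ℂ E]

/-- Admissible values for the Lempert function of `D` between `z` and `w`. -/
def lemSet (D : Set E) (z w : E) : Set ℝ :=
  {c | ∃ (f : ℂ → E) (ζ : ℂ), DifferentiableOn ℂ f uDisc ∧ MapsTo f uDisc D ∧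
    f 0 = z ∧ ζ ∈ uDisc ∧ f ζ = w ∧ c = pDist 0 ζ}

/-- The Kobayashi (pseudo)distance of `D`, defined via chains of analytic discs. -/
def kDist (D : Set E) (z w : E) : ℝ :=
  sInf {s | ∃ (m : ℕ) (p : ℕ → E), p 0 = z ∧ p m = w ∧ (∀ i, i ≤ m → p i ∈ D) ∧
      s = ∑ i ∈ Finset.range m, sInf (lemSet D (p i) (p (i + 1)))}

/-- Kobayashi ball of center `z` and radius `r` in `D`. -/
def kBall (D : Set E) (z : E) (r : ℝ) : Set E := {w ∈ D | kDist D w z < r}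

/-- Bloch radius of `X ⊆ D` with respect to the Kobayashi distance of `D`. -/
def blochRadius (D X : Set E) : ℝ≥0∞ :=
  ⨆ (r : NNReal) (_ : ∃ z ∈ D, kBall D z (r : ℝ) ⊆ X), (r : ℝ≥0∞)

/-- The Kobayashi infinitesimal (pseudo)metric of `D`. -/
def kMetric (D : Set E) (z v : E) : ℝ :=
  sInf {c | ∃ (f : ℂ → E) (r : ℝ), DifferentiableOn ℂ f uDisc ∧ MapsTo f uDisc D ∧
    f 0 = z ∧ 0 < r ∧ deriv f 0 = r • v ∧ c = 1 / r}

/-- The hyperbolic Lipschitz constant `μ_D(X)` of `X` inside `D`. -/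
def lipConst (D X : Set E) : ℝ :=
  sSup {t | ∃ z ∈ X, ∃ v : E, v ≠ 0 ∧ t = kMetric D z v / kMetric X z v}

/-- `comps f j = f j ∘ ⋯ ∘ f 0`, the iterated function system associated to `f`. -/
def comps (f : ℕ → E → E) : ℕ → E → E
  | 0 => f 0
  | (j + 1) => f (j + 1) ∘ comps f j

/-- `F` is a limit, in the compact-open topology on `D`, of a subsequence of the
iterated function system associated to `f`. -/
def IFSLimit (D : Set E) (f : ℕ → E → E) (F : E → E) : Prop :=
  ∃ s : ℕ → ℕ, StrictMono s ∧
    TendstoLocallyUniformlyOn (fun j => comps f (s j)) F atTop D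

/-- `X ⊆ D` is degenerate in `D`: every limit of every iterated function system of
holomorphic self-maps of `D` with image in `X` is constant. -/
def Degenerate (D X : Set E) : Prop :=
  ∀ f : ℕ → E → E, (∀ j, DifferentiableOn ℂ (f j) D ∧ MapsTo (f j) D X) →
    ∀ F : E → E, IFSLimit D f F → ∃ c, ∀ z ∈ D, F z = c

/-- A complex geodesic of `D`: a holomorphic isometry from the Poincaré distance of
the unit disc to the Kobayashi distance of `D`. -/
def IsComplexGeodesic (D : Set E) (φ : ℂ → E) : Prop :=
  DifferentiableOn ℂ φ uDisc ∧ MapsTo φ uDisc D ∧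
    ∀ ζ ∈ uDisc, ∀ η ∈ uDisc, kDist D (φ ζ) (φ η) = pDist ζ η

/-- A Lempert projection associated to the complex geodesic `φ`: a holomorphic
retraction of `D` onto `φ(𝔻)` with affine fibers. -/
def IsLempertProjection (D : Set E) (φ : ℂ → E) (ρ : E → E) : Prop :=
  DifferentiableOn ℂ ρ D ∧ MapsTo ρ D (φ '' uDisc) ∧
    (∀ z ∈ D, ρ (ρ z) = ρ z) ∧ (∀ ζ ∈ uDisc, ρ (φ ζ) = φ ζ) ∧
    ∀ ζ ∈ uDisc, ∃ (L : E →ₗ[ℂ] ℂ) (c : ℂ), L ≠ 0 ∧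
      {w ∈ D | ρ w = φ ζ} = {w ∈ D | L w = c}

/-- A Lempert projection device `(φ, ρ, ρ̃)`: a complex geodesic, an associated
Lempert projection, and the left inverse `ρ̃ = φ⁻¹ ∘ ρ`. -/
def IsLempertDevice (D : Set E) (φ : ℂ → E) (ρ : E → E) (ρt : E → ℂ) : Prop :=
  IsComplexGeodesic D φ ∧ IsLempertProjection D φ ρ ∧
    ∀ z ∈ D, ρt z ∈ uDisc ∧ φ (ρt z) = ρ z

/-- `X` is 1-Bloch in `D`: there is `C > 0` such that for every Lempert projection
device, `ρ̃(X)` is contained in a Bloch subdomain of the disc of Bloch radius `< C`. -/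
def OneBloch (D X : Set E) : Prop :=
  ∃ C > (0 : ℝ), ∀ (φ : ℂ → E) (ρ : E → E) (ρt : E → ℂ),
    IsLempertDevice D φ ρ ρt → ∃ U : Set ℂ, IsOpen U ∧ IsConnected U ∧ U ⊆ uDisc ∧
      ρt '' X ⊆ U ∧ blochRadiusD U < ENNReal.ofReal C

/-- `X` is c-Bloch in `D`: there is `C > 0` such that for every Lempert projection
device, `ρ̃(X ∩ φ(𝔻))` is contained in a Bloch subdomain of Bloch radius `≤ C`. -/
def CBloch (D X : Set E) : Prop :=
  ∃ C > (0 : ℝ), ∀ (φ : ℂ → E) (ρ : E → E) (ρt : E → ℂ),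
    IsLempertDevice D φ ρ ρt → ∃ U : Set ℂ, IsOpen U ∧ IsConnected U ∧ U ⊆ uDisc ∧
      ρt '' (X ∩ φ '' uDisc) ⊆ U ∧ blochRadiusD U ≤ ENNReal.ofReal C


/-! The chain rule and the contraction property of the Kobayashi metric give
`κ_X(F_j q; dF_j(q) v) ≤ μ_D(X)^j κ_D(q; v)`. Since `X` is bounded, the Schwarz lemma bounds
`κ_X` from below by a multiple of the norm, while `κ_D(q; ·)` is bounded above by a multiple of
the norm near each `q ∈ D`. Hence `‖dF_j‖` decays geometrically, locally uniformly on `D`, so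
every limit of the system is locally constant, hence constant on the connected set `D`. -/

open Topology

lemma IsOpen.exists_eq_const_of_eventuallyEq {V W : Type*}
    [NormedAddCommGroup V] [NormedSpace ℂ V] [NormedAddCommGroup W] [NormedSpace ℂ W]
    {s : Set V} (hs : IsOpen s) (hs' : IsPreconnected s) {F : V → W}
    (hF : ∀ p ∈ s, F =ᶠ[𝓝 p] fun _ => F p) : ∃ c, ∀ z ∈ s, F z = c := by
  have hF' : ∀ p ∈ s, HasFDerivAt F (0 : V →L[ℂ] W) p := fun p hp =>
    (hasFDerivAt_const (F p) p).congr_of_eventuallyEq (hF p hp)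
  exact hs.exists_is_const_of_fderiv_eq_zero hs'
    (fun p hp => (hF' p hp).differentiableAt.differentiableWithinAt) fun p hp => (hF' p hp).fderiv

section Kobayashi

variable {E' : Type*} [NormedAddCommGroup E'] [NormedSpace ℂ E']

def kMetricSet (D : Set E) (z v : E) : Set ℝ :=
  {c | ∃ (f : ℂ → E) (r : ℝ), DifferentiableOn ℂ f uDisc ∧ MapsTo f uDisc D ∧
    f 0 = z ∧ 0 < r ∧ deriv f 0 = r • v ∧ c = 1 / r}

lemma kMetric_eq_sInf (D : Set E) (z v : E) : kMetric D z v = sInf (kMetricSet D z v) := rfl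

lemma bddBelow_kMetricSet (D : Set E) (z v : E) : BddBelow (kMetricSet D z v) :=
  ⟨0, by rintro _ ⟨f, r, -, -, -, hr, -, rfl⟩; positivity⟩

lemma kMetric_nonneg (D : Set E) (z v : E) : 0 ≤ kMetric D z v :=
  Real.sInf_nonneg (by rintro _ ⟨f, r, -, -, -, hr, -, rfl⟩; positivity)

lemma one_div_mem_kMetricSet {D : Set E} {z v : E} {δ r : ℝ} (hδ : 0 < δ)
    (hball : ball z δ ⊆ D) (hr : 0 < r) (hrv : r * ‖v‖ ≤ δ) :
    1 / r ∈ kMetricSet D z v := by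
  refine ⟨fun lam : ℂ => z + lam • r • v, r, ?_, ?_, by simp, hr, ?_, rfl⟩
  · exact ((differentiable_id.smul_const _).const_add z).differentiableOn
  · intro lam hlam
    have hlam : ‖lam‖ < 1 := mem_ball_zero_iff.1 hlam
    apply hball
    rw [mem_ball_iff_norm, add_sub_cancel_left, norm_smul, norm_smul, Real.norm_of_nonneg hr.le]
    calc ‖lam‖ * (r * ‖v‖) ≤ ‖lam‖ * δ := by gcongr
      _ < δ := mul_lt_of_lt_one_left hδ hlam
  · simpa using (((hasDerivAt_id (0 : ℂ)).smul_const (r • v)).const_add z).deriv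

lemma kMetricSet_nonempty {D : Set E} (hDo : IsOpen D) {z : E} (hz : z ∈ D) (v : E) :
    (kMetricSet D z v).Nonempty := by
  obtain ⟨δ, hδ, hball⟩ := Metric.isOpen_iff.1 hDo z hz
  refine ⟨_, one_div_mem_kMetricSet hδ hball (r := δ / (‖v‖ + 1)) (by positivity) ?_⟩
  rw [div_mul_eq_mul_div, div_le_iff₀ (by positivity)]
  nlinarith [norm_nonneg v]

lemma kMetric_le_of_ball_subset {D : Set E} {z : E} {δ : ℝ} (hδ : 0 < δ)
    (hball : ball z δ ⊆ D) (v : E) : kMetric D z v ≤ ‖v‖ / δ := by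
  rw [kMetric_eq_sInf]
  rcases eq_or_ne v 0 with rfl | hv
  · rw [norm_zero, zero_div]
    refine le_of_forall_pos_le_add fun ε hε => ?_
    rw [zero_add, ← one_div_one_div ε]
    exact csInf_le (bddBelow_kMetricSet D z 0)
      (one_div_mem_kMetricSet hδ hball (one_div_pos.2 hε) (by simpa using hδ.le))
  · have hv : 0 < ‖v‖ := norm_pos_iff.2 hv
    have hmem := one_div_mem_kMetricSet hδ hball (r := δ / ‖v‖) (by positivity)
      (div_mul_cancel₀ δ hv.ne').le
    rw [one_div_div] at hmem
    exact csInf_le (bddBelow_kMetricSet D z v) hmem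

lemma kMetric_map_le {D : Set E} {D' : Set E'} (hDo : IsOpen D) {g : E → E'}
    (hg : DifferentiableOn ℂ g D) (hgD : MapsTo g D D') {p : E} (hp : p ∈ D) (v : E) :
    kMetric D' (g p) (fderiv ℂ g p v) ≤ kMetric D p v := by
  refine csInf_le_csInf (bddBelow_kMetricSet D' _ _) (kMetricSet_nonempty hDo hp v) ?_
  rintro _ ⟨φ, r, hφ, hφD, hφ0, hr, hφ', rfl⟩
  have hφ0' : DifferentiableAt ℂ φ 0 :=
    hφ.differentiableAt (isOpen_ball.mem_nhds (mem_ball_self one_pos))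
  have hgp : DifferentiableAt ℂ g (φ 0) := hφ0 ▸ hg.differentiableAt (hDo.mem_nhds hp)
  refine ⟨g ∘ φ, r, hg.comp hφ hφD, hgD.comp hφD, by simp [hφ0], hr, ?_, rfl⟩
  rw [(hgp.hasFDerivAt.comp_hasDerivAt 0 hφ0'.hasDerivAt).deriv, hφ0, hφ']
  exact (fderiv ℂ g p).map_smul_of_tower r v

lemma kMetric_le_of_subset {D X : Set E} (hXo : IsOpen X) (hXD : X ⊆ D) {z : E} (hz : z ∈ X)
    (v : E) : kMetric D z v ≤ kMetric X z v := by
  simpa using kMetric_map_le hXo differentiableOn_id (mapsTo_id X |>.mono_right hXD) hz v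

lemma norm_div_le_kMetric {X : Set E} (hXo : IsOpen X) {p : E} (hp : p ∈ X) {R : ℝ}
    (hR : 0 < R) (hXR : X ⊆ closedBall p R) (v : E) : ‖v‖ / R ≤ kMetric X p v := by
  refine le_csInf (kMetricSet_nonempty hXo hp v) ?_
  rintro _ ⟨φ, r, hφ, hφX, rfl, hr, hφ', rfl⟩
  have hschwarz := Complex.norm_deriv_le_div_of_mapsTo_ball hφ (hφX.mono_right hXR) one_pos
  rw [hφ', norm_smul, Real.norm_of_nonneg hr.le, div_one] at hschwarz
  rw [div_le_div_iff₀ hR hr]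
  linarith

lemma kMetric_pos {X : Set E} (hXo : IsOpen X) (hXb : Bornology.IsBounded X) {p : E}
    (hp : p ∈ X) {v : E} (hv : v ≠ 0) : 0 < kMetric X p v := by
  obtain ⟨R, hR, hXR⟩ := hXb.subset_closedBall_lt 0 p
  exact (div_pos (norm_pos_iff.2 hv) hR).trans_le (norm_div_le_kMetric hXo hp hR hXR v)

lemma lipConst_nonneg (D X : Set E) : 0 ≤ lipConst D X :=
  Real.sSup_nonneg (by
    rintro _ ⟨z, -, v, -, rfl⟩
    exact div_nonneg (kMetric_nonneg D z v) (kMetric_nonneg X z v))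

lemma kMetric_le_lipConst_mul {D X : Set E} (hXo : IsOpen X) (hXb : Bornology.IsBounded X)
    (hXD : X ⊆ D) {z : E} (hz : z ∈ X) (v : E) :
    kMetric D z v ≤ lipConst D X * kMetric X z v := by
  rcases eq_or_ne v 0 with rfl | hv
  · obtain ⟨δ, hδ, hball⟩ := Metric.isOpen_iff.1 hXo z hz
    calc kMetric D z 0 ≤ ‖(0 : E)‖ / δ := kMetric_le_of_ball_subset hδ (hball.trans hXD) 0
      _ = 0 := by simp
      _ ≤ lipConst D X * kMetric X z 0 :=
        mul_nonneg (lipConst_nonneg D X) (kMetric_nonneg X z 0)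
  · have hbdd :
        BddAbove {t | ∃ z ∈ X, ∃ v : E, v ≠ 0 ∧ t = kMetric D z v / kMetric X z v} :=
      ⟨1, by
        rintro _ ⟨w, hw, u, -, rfl⟩
        exact div_le_one_of_le₀ (kMetric_le_of_subset hXo hXD hw u) (kMetric_nonneg X w u)⟩
    rw [← div_le_iff₀ (kMetric_pos hXo hXb hz hv)]
    exact le_csSup hbdd ⟨z, hz, v, hv, rfl⟩

end Kobayashi

lemma mapsTo_comps {α : Type*} {D X : Set α} {f : ℕ → α → α} (hf : ∀ j, MapsTo (f j) D X)
    (hXD : X ⊆ D) (j : ℕ) :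
    MapsTo (comps f j) D X := by
  induction j with
  | zero => exact hf 0
  | succ j ih => exact (hf (j + 1)).comp (ih.mono_right hXD)

section IteratedFunctionSystem

variable {D X : Set E} {f : ℕ → E → E}

lemma differentiableOn_comps (hfd : ∀ j, DifferentiableOn ℂ (f j) D)
    (hfD : ∀ j, MapsTo (f j) D D) (j : ℕ) : DifferentiableOn ℂ (comps f j) D := by
  induction j with
  | zero => exact hfd 0
  | succ j ih => exact (hfd (j + 1)).comp ih (mapsTo_comps hfD subset_rfl j)

lemma kMetric_fderiv_comps_le (hDo : IsOpen D) (hXo : IsOpen X) (hXb : Bornology.IsBounded X)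
    (hXD : X ⊆ D) (hfd : ∀ j, DifferentiableOn ℂ (f j) D) (hfX : ∀ j, MapsTo (f j) D X)
    (j : ℕ) {q : E} (hq : q ∈ D) (v : E) :
    kMetric X (comps f j q) (fderiv ℂ (comps f j) q v) ≤ lipConst D X ^ j * kMetric D q v := by
  induction j generalizing v with
  | zero => simpa [comps] using kMetric_map_le hDo (hfd 0) (hfX 0) hq v
  | succ j ih =>
    set w := fderiv ℂ (comps f j) q v
    have hqj : comps f j q ∈ X := mapsTo_comps hfX hXD j hq
    have hchain : fderiv ℂ (comps f (j + 1)) q v = fderiv ℂ (f (j + 1)) (comps f j q) w := by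
      rw [comps, fderiv_comp q ((hfd _).differentiableAt (hDo.mem_nhds (hXD hqj)))
        ((differentiableOn_comps hfd (fun i => (hfX i).mono_right hXD) j).differentiableAt
          (hDo.mem_nhds hq))]
      rfl
    calc kMetric X (comps f (j + 1) q) (fderiv ℂ (comps f (j + 1)) q v)
        = kMetric X (f (j + 1) (comps f j q)) (fderiv ℂ (f (j + 1)) (comps f j q) w) := by
          rw [hchain]; rfl
      _ ≤ kMetric D (comps f j q) w := kMetric_map_le hDo (hfd _) (hfX _) (hXD hqj) w
      _ ≤ lipConst D X * kMetric X (comps f j q) w := kMetric_le_lipConst_mul hXo hXb hXD hqj w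
      _ ≤ lipConst D X * (lipConst D X ^ j * kMetric D q v) := by
          gcongr
          · exact lipConst_nonneg D X
          · exact ih v
      _ = lipConst D X ^ (j + 1) * kMetric D q v := by ring

lemma norm_fderiv_comps_le (hDo : IsOpen D) (hXo : IsOpen X) (hXb : Bornology.IsBounded X)
    (hXD : X ⊆ D) (hfd : ∀ j, DifferentiableOn ℂ (f j) D) (hfX : ∀ j, MapsTo (f j) D X)
    {R : ℝ} (hR : 0 < R) (hXR : ∀ x ∈ X, X ⊆ closedBall x R) {q : E} {δ : ℝ}
    (hδ : 0 < δ) (hball : ball q δ ⊆ D) (j : ℕ) :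
    ‖fderiv ℂ (comps f j) q‖ ≤ R * lipConst D X ^ j / δ := by
  have hq : q ∈ D := hball (mem_ball_self hδ)
  have hqj : comps f j q ∈ X := mapsTo_comps hfX hXD j hq
  have hμ := lipConst_nonneg D X
  refine ContinuousLinearMap.opNorm_le_bound _ (by positivity) fun v => ?_
  set w := fderiv ℂ (comps f j) q v
  have hlower : ‖w‖ / R ≤ kMetric X (comps f j q) w := norm_div_le_kMetric hXo hqj hR (hXR _ hqj) w
  have hdecay := kMetric_fderiv_comps_le hDo hXo hXb hXD hfd hfX j hq v
  have hupper : kMetric D q v ≤ ‖v‖ / δ := kMetric_le_of_ball_subset hδ hball v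
  calc ‖w‖ = R * (‖w‖ / R) := by field_simp
    _ ≤ R * (lipConst D X ^ j * kMetric D q v) := by gcongr; exact hlower.trans hdecay
    _ ≤ R * (lipConst D X ^ j * (‖v‖ / δ)) := by gcongr
    _ = R * lipConst D X ^ j / δ * ‖v‖ := by ring

lemma IFSLimit.eventuallyEq_const (hDo : IsOpen D) (hXo : IsOpen X) (hXb : Bornology.IsBounded X)
    (hXD : X ⊆ D) (hμ : lipConst D X < 1) (hfd : ∀ j, DifferentiableOn ℂ (f j) D)
    (hfX : ∀ j, MapsTo (f j) D X) {F : E → E} (hF : IFSLimit D f F) {p : E} (hp : p ∈ D) :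
    F =ᶠ[𝓝 p] fun _ => F p := by
  obtain ⟨s, hs, hconv⟩ := hF
  obtain ⟨R, hR, hXR⟩ : ∃ R > 0, ∀ x ∈ X, X ⊆ closedBall x R :=
    ⟨Metric.diam X + 1, by positivity, fun x hx y hy =>
      (Metric.dist_le_diam_of_mem hXb hy hx).trans (le_add_of_nonneg_right zero_le_one)⟩
  obtain ⟨δ, hδ, hball⟩ := Metric.isOpen_iff.1 hDo p hp
  have hhalf : ball p (δ / 2) ⊆ D := (ball_subset_ball (half_le_self hδ.le)).trans hball
  have hbound : ∀ j, ∀ q ∈ ball p (δ / 2),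
      ‖fderiv ℂ (comps f j) q‖ ≤ R * lipConst D X ^ j / (δ / 2) :=
    fun j q hq => norm_fderiv_comps_le hDo hXo hXb hXD hfd hfX hR hXR (half_pos hδ)
      ((ball_subset_ball' (by linarith [mem_ball.1 hq])).trans hball) j
  filter_upwards [ball_mem_nhds p (half_pos hδ)] with z hz
  have hlip :
      ∀ j, ‖comps f j z - comps f j p‖ ≤ R * lipConst D X ^ j / (δ / 2) * ‖z - p‖ :=
    fun j => (convex_ball p (δ / 2)).norm_image_sub_le_of_norm_fderiv_le
      (fun q hq => (differentiableOn_comps hfd (fun i => (hfX i).mono_right hXD) j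
        ).differentiableAt (hDo.mem_nhds (hhalf hq))) (hbound j) (mem_ball_self (half_pos hδ)) hz
  have hsmall :
      Tendsto (fun j => R * lipConst D X ^ s j / (δ / 2) * ‖z - p‖) atTop (𝓝 0) := by
    have := (tendsto_pow_atTop_nhds_zero_of_lt_one (lipConst_nonneg D X) hμ).comp hs.tendsto_atTop
    simpa using ((this.const_mul R).div_const (δ / 2)).mul_const ‖z - p‖
  have hdiff := (hconv.tendsto_at (hhalf hz)).sub (hconv.tendsto_at hp)
  exact sub_eq_zero.1 (tendsto_nhds_unique hdiff (squeeze_zero_norm (fun j => hlip (s j)) hsmall))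

end IteratedFunctionSystem

theorem stmt5_general {n : ℕ} (D X : Set (EuclideanSpace ℂ (Fin n)))
    (hDo : IsOpen D) (hDc : IsConnected D) (hDb : Bornology.IsBounded D)
    (hXo : IsOpen X) (hXD : X ⊆ D)
    (hLip : lipConst D X < 1) :
    Degenerate D X := by
  intro f hf F hF
  exact hDo.exists_eq_const_of_eventuallyEq hDc.isPreconnected fun p hp =>
    hF.eventuallyEq_const hDo hXo (hDb.subset hXD) hXD hLip (fun j => (hf j).1)
      (fun j => (hf j).2) hp

/-- in a bounded domain in `ℂⁿ`, a Lipschitz subdomain is degenerate. -/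
theorem stmt5 {n : ℕ} (D X : Set (EuclideanSpace ℂ (Fin n)))
    (hDo : IsOpen D) (hDc : IsConnected D) (hDb : Bornology.IsBounded D)
    (hXo : IsOpen X) (hXc : IsConnected X) (hXD : X ⊆ D)
    (hLip : lipConst D X < 1) :
    Degenerate D X :=
  stmt5_general D X hDo hDc hDb hXo hXD hLip
end
end

section
/- Let D ⊂ ℂⁿ be a bounded convex domain, {φ_j} a sequence of complex geodesics converging in the compact-open topology to a complex geodesic φ : 𝔻 → D, and let ρ_{φ_j} be Lempert projections associated to φ_j. Then any limit ρ of {ρ_{φ_j}} in the compact-open topology satisfies: ρ(D) = φ(𝔻), ρ ∘ ρ = ρ, ρ fixes φ(𝔻) pointwise, and ρ has affine fibers; i.e., ρ is a Lempert projection associated to φ. -/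
open Metric Set Filter
open scoped ENNReal NNReal

noncomputable section

variable {E : Type*} [NormedAddCommGroup E] [NormedSpace ℂ E]

/-!
The limit `ρ` is holomorphic because Cauchy estimates make the derivatives of the `ρ_j` converge
as well, and it fixes `φ(𝔻)` because `ρ_j ∘ φ_j = φ_j`.

To see that `ρ(D) ⊆ φ(𝔻)`, write `ρ_j z = φ_j η_j`. Pushing a chain of affine discs running from
`z` to (a neighbourhood of) `φ 0` forward by `ρ_j`, which fixes `φ_j 0`, bounds
`k_D(φ_j η_j, φ_j 0)` uniformly in `j`; this is where convexity enters. Since `φ_j` is a Kobayashi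
isometry, the `η_j` stay in a compact subdisc, and any limit point `ζ` gives `ρ z = φ ζ`.

For the fibres, normalise the functionals `L_j` cutting out the fibres of `ρ_j` over `φ_j ζ` and
extract a limit `Λ`. If `ρ w = φ ζ`, the fibre of `ρ_j` through `w` contains `ρ_j w → φ ζ`, and
unless it is the fibre over `φ_j ζ → φ ζ` it is disjoint from it; two disjoint hyperplane slices
through a fixed ball around `φ ζ` are almost parallel, which forces `L_j w - L_j (φ_j ζ) → 0`. Conversely, a point of
`{Λ = Λ (φ ζ)}` is a limit of points of the fibres of `ρ_j` over `φ_j ζ`.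
-/

open scoped Topology

section LocallyUniform

variable {ι κ α β : Type*} [TopologicalSpace α] [UniformSpace β] {F : ι → α → β} {f : α → β}
  {s : Set α} {p : Filter ι}

lemma TendstoLocallyUniformlyOn.comp_tendsto (h : TendstoLocallyUniformlyOn F f p s)
    {q : Filter κ} {k : κ → ι} (hk : Tendsto k q p) :
    TendstoLocallyUniformlyOn (fun n => F (k n)) f q s := fun u hu x hx =>
  (h u hu x hx).imp fun _ ⟨ht, hev⟩ => ⟨ht, hk.eventually hev⟩

lemma TendstoLocallyUniformlyOn.tendsto_comp_of_isOpen (h : TendstoLocallyUniformlyOn F f p s)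
    (hs : IsOpen s) (hf : ContinuousOn f s) {x : α} (hx : x ∈ s) {g : ι → α}
    (hg : Tendsto g p (𝓝 x)) : Tendsto (fun n => F n (g n)) p (𝓝 (f x)) :=
  h.tendsto_comp (hf x hx) hx (by rwa [hs.nhdsWithin_eq hx])

end LocallyUniform

section NormedSpace

variable {F : Type*} [NormedAddCommGroup F] [NormedSpace ℂ F]

lemma tendsto_clm_apply {ι : Type*} {l : Filter ι} {L : ι → E →L[ℂ] F} {Λ : E →L[ℂ] F}
    (hL : Tendsto L l (𝓝 Λ)) {x : ι → E} {x₀ : E} (hx : Tendsto x l (𝓝 x₀)) :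
    Tendsto (fun j => L j (x j)) l (𝓝 (Λ x₀)) :=
  ((continuous_fst.clm_apply continuous_snd).tendsto (Λ, x₀)).comp (hL.prodMk_nhds hx)

lemma norm_fderiv_le_of_forall_norm_le {f : E → F} {x z : E} {δ M : ℝ}
    (hf : DifferentiableOn ℂ f (ball x (2 * δ))) (hM : ∀ y ∈ ball x (2 * δ), ‖f y‖ ≤ M)
    (hz : z ∈ ball x δ) : ‖fderiv ℂ f z‖ ≤ 2 * M / δ := by
  have hδ : 0 < δ := pos_of_mem_ball hz
  have hsub : ball z δ ⊆ ball x (2 * δ) := ball_subset_ball' (by linarith [mem_ball.1 hz])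
  refine Complex.norm_fderiv_le_div_of_mapsTo_ball (hf.mono hsub) (fun y hy => ?_) hδ
  rw [mem_closedBall, dist_eq_norm]
  linarith [norm_sub_le (f y) (f z), hM y (hsub hy), hM z (hsub (mem_ball_self hδ))]

lemma UniformCauchySeqOn.fderiv_ball {ι : Type*} {l : Filter ι} {f : ι → E → F} {x : E} {δ : ℝ}
    (hδ : 0 < δ) (hf : ∀ n, DifferentiableOn ℂ (f n) (ball x (2 * δ)))
    (hC : UniformCauchySeqOn f l (ball x (2 * δ))) :
    UniformCauchySeqOn (fun n => fderiv ℂ (f n)) l (ball x δ) := by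
  intro u hu
  obtain ⟨ε, hε, hεu⟩ := Metric.mem_uniformity_dist.1 hu
  filter_upwards [hC _ (dist_mem_uniformity (by positivity : 0 < ε * δ / 4))] with mn hmn z hz
  have hz' : ball x (2 * δ) ∈ 𝓝 z := isOpen_ball.mem_nhds (ball_subset_ball (by linarith) hz)
  apply hεu
  rw [dist_eq_norm, ← fderiv_sub ((hf _).differentiableAt hz') ((hf _).differentiableAt hz')]
  calc ‖fderiv ℂ (f mn.1 - f mn.2) z‖ ≤ 2 * (ε * δ / 4) / δ :=
        norm_fderiv_le_of_forall_norm_le ((hf _).sub (hf _))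
          (fun y hy => by simpa [dist_eq_norm] using (hmn y hy).le) hz
    _ < ε := by field_simp; linarith

lemma TendstoLocallyUniformlyOn.differentiableOn_of_finiteDimensional [FiniteDimensional ℂ E]
    [CompleteSpace F] {ι : Type*} {l : Filter ι} [l.NeBot] {f : ι → E → F} {g : E → F}
    {U : Set E} (hU : IsOpen U) (hf : ∀ n, DifferentiableOn ℂ (f n) U)
    (hfg : TendstoLocallyUniformlyOn f g l U) : DifferentiableOn ℂ g U := by
  intro x hx
  obtain ⟨ε, hε, hxU⟩ := Metric.isOpen_iff.1 hU x hx
  set δ := ε / 3 with hδε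
  have hδ : 0 < δ := by positivity
  have hK : closedBall x (2 * δ) ⊆ U := (closedBall_subset_ball (by linarith)).trans hxU
  have hC : UniformCauchySeqOn f l (ball x (2 * δ)) :=
    (((tendstoLocallyUniformlyOn_iff_forall_isCompact hU).1 hfg _ hK
      (isCompact_closedBall x _)).uniformCauchySeqOn).mono ball_subset_closedBall
  have hC' := hC.fderiv_ball hδ fun n => (hf n).mono (ball_subset_closedBall.trans hK)
  choose! g' hg' using fun z (hz : z ∈ ball x δ) => CompleteSpace.complete (hC'.cauchy_map hz)
  have hsub : ball x δ ⊆ U :=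
    (ball_subset_ball (by linarith)).trans (ball_subset_closedBall.trans hK)
  have hg := hasFDerivAt_of_tendstoUniformlyOn isOpen_ball (hC'.tendstoUniformlyOn_of_tendsto hg')
    (fun n z hz => ((hf n).differentiableAt (hU.mem_nhds (hsub hz))).hasFDerivAt)
    (fun z hz => hfg.tendsto_at (hsub hz)) (mem_ball_self hδ)
  exact hg.differentiableAt.differentiableWithinAt

end NormedSpace

section Disc

lemma zero_mem_uDisc : (0 : ℂ) ∈ uDisc := mem_ball_self one_pos

lemma mem_uDisc_iff {z : ℂ} : z ∈ uDisc ↔ ‖z‖ < 1 := mem_ball_zero_iff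

lemma artanh_norm_eq_real_artanh {ζ : ℂ} (hζ : ζ ∈ uDisc) : artanh ‖ζ‖ = Real.artanh ‖ζ‖ := by
  rw [Real.artanh_eq_half_log ⟨by linarith [norm_nonneg ζ], (mem_uDisc_iff.1 hζ).le⟩, artanh]
  ring

lemma pDist_zero_nonneg {ζ : ℂ} (hζ : ζ ∈ uDisc) : 0 ≤ pDist 0 ζ := by
  simpa [pDist, artanh_norm_eq_real_artanh hζ] using Real.artanh_nonneg (norm_nonneg ζ)

lemma norm_le_tanh_of_pDist_le {η : ℂ} {B : ℝ} (hη : η ∈ uDisc) (h : pDist η 0 ≤ B) :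
    ‖η‖ ≤ Real.tanh B := by
  simp only [pDist, sub_zero, mul_zero, div_one, artanh_norm_eq_real_artanh hη] at h
  by_contra! hlt
  have := Real.artanh_lt_artanh (Real.neg_one_lt_tanh B) (mem_uDisc_iff.1 hη) hlt
  rw [Real.artanh_tanh] at this
  linarith

end Disc

section Kobayashi

lemma lemSet_nonneg {D : Set E} {z w : E} {c : ℝ} (hc : c ∈ lemSet D z w) : 0 ≤ c := by
  obtain ⟨f, ζ, -, -, -, hζ, -, rfl⟩ := hc
  exact pDist_zero_nonneg hζ

lemma lemSet_subset_map {D : Set E} {a b : E} {g : E → E} (hg : DifferentiableOn ℂ g D)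
    (hgD : MapsTo g D D) : lemSet D a b ⊆ lemSet D (g a) (g b) := by
  rintro _ ⟨f, ζ, hf, hfD, rfl, hζ, rfl, rfl⟩
  exact ⟨g ∘ f, ζ, hg.comp hf hfD, hgD.comp hfD, rfl, hζ, rfl, rfl⟩

lemma pDist_zero_half_mem_lemSet {D : Set E} {a b : E} {δ : ℝ} (hδ : 0 < δ)
    (hball : ball a δ ⊆ D) (hab : dist b a ≤ δ / 2) : pDist 0 (1 / 2) ∈ lemSet D a b := by
  refine ⟨fun t => a + (2 * t) • (b - a), 1 / 2, by fun_prop, fun t ht => hball ?_, by simp,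
    mem_uDisc_iff.2 (by norm_num), by norm_num, rfl⟩
  rw [mem_ball, dist_eq_norm, add_sub_cancel_left, norm_smul, norm_mul, ← dist_eq_norm]
  have ht := mem_uDisc_iff.1 ht
  norm_num
  nlinarith [norm_nonneg t, dist_nonneg (x := b) (y := a)]

lemma kDist_le_sum {D : Set E} {z w : E} (m : ℕ) (p : ℕ → E) (h0 : p 0 = z) (hm : p m = w)
    (hp : ∀ i ≤ m, p i ∈ D) :
    kDist D z w ≤ ∑ i ∈ Finset.range m, sInf (lemSet D (p i) (p (i + 1))) := by
  refine csInf_le ⟨0, ?_⟩ ⟨m, p, h0, hm, hp, rfl⟩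
  rintro _ ⟨-, -, -, -, -, rfl⟩
  exact Finset.sum_nonneg fun i _ => Real.sInf_nonneg fun _ => lemSet_nonneg

lemma kDist_map_le_of_thickening_subset {D : Set E} {a b : E} {δ : ℝ} (hδ : 0 < δ)
    (hD : thickening δ (segment ℝ a b) ⊆ D) {m : ℕ} (hm : m ≠ 0) (hab : dist a b ≤ m * (δ / 2))
    {g : E → E} (hg : DifferentiableOn ℂ g D) (hgD : MapsTo g D D) :
    kDist D (g a) (g b) ≤ m * pDist 0 (1 / 2) := by
  set p : ℕ → E := fun i => AffineMap.lineMap a b ((i : ℝ) / m)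
  have hmpos : (0 : ℝ) < m := by positivity
  have hball : ∀ i ≤ m, ball (p i) δ ⊆ D := fun i hi =>
    (ball_subset_thickening (lineMap_mem_segment ℝ a b ⟨by positivity,
      div_le_one_of_le₀ (by exact_mod_cast hi) hmpos.le⟩) δ).trans hD
  have hstep : ∀ i, dist (p (i + 1)) (p i) ≤ δ / 2 := fun i => by
    rw [dist_lineMap_lineMap, Real.dist_eq, ← sub_div, Nat.cast_succ, add_sub_cancel_left,
      abs_of_pos (by positivity), div_mul_eq_mul_div, one_mul, div_le_iff₀ hmpos]
    linarith
  calc kDist D (g a) (g b)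
      ≤ ∑ i ∈ Finset.range m, sInf (lemSet D (g (p i)) (g (p (i + 1)))) :=
        kDist_le_sum m (g ∘ p) (by simp [p]) (by simp [p, hmpos.ne'])
          fun i hi => hgD (hball i hi (mem_ball_self hδ))
    _ ≤ ∑ _i ∈ Finset.range m, pDist 0 (1 / 2) :=
        Finset.sum_le_sum fun i hi => csInf_le ⟨0, fun _ => lemSet_nonneg⟩ <|
          lemSet_subset_map hg hgD <| pDist_zero_half_mem_lemSet hδ
            (hball i (Finset.mem_range.1 hi).le) (hstep i)
    _ = m * pDist 0 (1 / 2) := by simp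

lemma exists_forall_kDist_map_le {D : Set E} (hDo : IsOpen D) (hDc : Convex ℝ D) {z w : E}
    (hz : z ∈ D) (hw : w ∈ D) :
    ∃ B δ, 0 < δ ∧ ∀ w' ∈ ball w δ, ∀ g : E → E, DifferentiableOn ℂ g D → MapsTo g D D →
      kDist D (g z) (g w') ≤ B := by
  have hseg : IsCompact (segment ℝ z w) := by
    rw [segment_eq_image_lineMap]
    exact isCompact_Icc.image AffineMap.lineMap_continuous
  obtain ⟨δ, hδ, hthick⟩ := hseg.exists_thickening_subset_open hDo (hDc.segment_subset hz hw)
  obtain ⟨m, hm⟩ := exists_nat_gt ((dist z w + δ / 2) / (δ / 4))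
  have hmpos : (0 : ℝ) < m := lt_of_le_of_lt (by positivity) hm
  refine ⟨m * pDist 0 (1 / 2), δ / 2, half_pos hδ, fun w' hw' g hg hgD =>
    kDist_map_le_of_thickening_subset (half_pos hδ) ?_ (by exact_mod_cast hmpos.ne') ?_ hg hgD⟩
  · have hsub : segment ℝ z w' ⊆ thickening (δ / 2) (segment ℝ z w) :=
      ((convex_segment z w).thickening _).segment_subset
        (self_subset_thickening (half_pos hδ) _ (left_mem_segment ℝ z w))
        (mem_thickening_iff.2 ⟨w, right_mem_segment ℝ z w, hw'⟩)
    calc thickening (δ / 2) (segment ℝ z w')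
        ⊆ thickening (δ / 2) (thickening (δ / 2) (segment ℝ z w)) :=
          thickening_subset_of_subset _ hsub
      _ ⊆ thickening (δ / 2 + δ / 2) (segment ℝ z w) := thickening_thickening_subset _ _ _
      _ ⊆ D := by rwa [add_halves]
  · rw [div_lt_iff₀ (by positivity)] at hm
    linarith [dist_triangle z w w', mem_ball.1 hw', dist_comm w' w]

end Kobayashi

lemma norm_mul_le_of_forall_add_mul_ne {a b c : ℂ} {r d : ℝ} (hr : 0 ≤ r)
    (h : ∀ t : ℂ, ‖t‖ * r < d → a + t * b ≠ c) : ‖b‖ * d ≤ ‖c - a‖ * r := by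
  by_contra! hlt
  have hb : b ≠ 0 := by
    rintro rfl
    simp only [norm_zero, zero_mul] at hlt
    exact (mul_nonneg (norm_nonneg _) hr).not_gt hlt
  refine h ((c - a) / b) ?_ (by field_simp; ring)
  rw [norm_div, div_mul_eq_mul_div, div_lt_iff₀ (norm_pos_iff.2 hb)]
  linarith

namespace IsLempertProjection

variable {D : Set E} {ψ : ℂ → E} {r : E → E}

lemma mapsTo (hr : IsLempertProjection D ψ r) (hψ : MapsTo ψ uDisc D) : MapsTo r D D :=
  hr.2.1.mono_right (hψ.image_subset)

lemma apply_add_smul_sub (hr : IsLempertProjection D ψ r) {a b : E} (ha : a ∈ D) (hb : b ∈ D)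
    (hab : r a = r b) {t : ℂ} (ht : a + t • (b - a) ∈ D) : r (a + t • (b - a)) = r a := by
  obtain ⟨θ, hθ, hθa⟩ := hr.2.1 ha
  obtain ⟨L, c, -, hfib⟩ := hr.2.2.2.2 θ hθ
  have hmem : ∀ y ∈ D, r y = ψ θ ↔ L y = c := fun y hy => by
    simpa [hy] using Set.ext_iff.1 hfib y
  have hLa : L a = c := (hmem a ha).1 hθa.symm
  have hLb : L b = c := (hmem b hb).1 (hab ▸ hθa.symm)
  rw [← hθa, hmem _ ht, map_add, map_smul, map_sub, hLa, hLb, sub_self, smul_zero, add_zero]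

lemma exists_norm_eq_one [FiniteDimensional ℂ E] (hr : IsLempertProjection D ψ r)
    (hψ : MapsTo ψ uDisc D) {θ : ℂ} (hθ : θ ∈ uDisc) :
    ∃ L : E →L[ℂ] ℂ, ‖L‖ = 1 ∧ ∀ y ∈ D, r y = ψ θ ↔ L y = L (ψ θ) := by
  obtain ⟨L₀, c, hL₀, hfib⟩ := hr.2.2.2.2 θ hθ
  have hmem : ∀ y ∈ D, r y = ψ θ ↔ L₀ y = c := fun y hy => by
    simpa [hy] using Set.ext_iff.1 hfib y
  have hc : L₀ (ψ θ) = c := (hmem _ (hψ hθ)).1 (hr.2.2.2.1 θ hθ)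
  set L₁ := LinearMap.toContinuousLinearMap L₀
  have hL₁ : L₁ ≠ 0 := fun h => hL₀ (by ext y; simpa [L₁] using congr($h y))
  refine ⟨(‖L₁‖⁻¹ : ℂ) • L₁, norm_smul_inv_norm hL₁, fun y hy => ?_⟩
  have hne : (‖L₁‖⁻¹ : ℂ) ≠ 0 := by simpa using hL₁
  simp [hmem y hy, hc, hne, L₁]

lemma norm_sub_mul_le (hr : IsLempertProjection D ψ r) {θ : ℂ} {L : E →L[ℂ] ℂ} (hL : ‖L‖ ≤ 1)
    (hfib : ∀ y ∈ D, r y = ψ θ ↔ L y = L (ψ θ)) {w : E} (hw : w ∈ D) {d : ℝ} (hd : 0 < d)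
    (hball : ball (r w) d ⊆ D) :
    ‖L w - L (ψ θ)‖ * d ≤ ‖ψ θ - r w‖ * (‖w - r w‖ + d) := by
  have hLle : ∀ y, ‖L y‖ ≤ ‖y‖ := fun y => (L.le_opNorm y).trans (by nlinarith [norm_nonneg y])
  by_cases hwθ : r w = ψ θ
  · rw [(hfib w hw).1 hwθ, sub_self, norm_zero, zero_mul]
    positivity
  set p := r w
  have hpD : p ∈ D := hball (mem_ball_self hd)
  have hp : r p = r w := hr.2.2.1 w hw
  -- The complex line through `p` and `w` stays in the fibre of `r` over `p`, away from `ψ θ`.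
  have hline : ‖L (w - p)‖ * d ≤ ‖L (ψ θ) - L p‖ * ‖w - p‖ := by
    refine norm_mul_le_of_forall_add_mul_ne (norm_nonneg _) fun t ht heq => hwθ ?_
    have hyD : p + t • (w - p) ∈ D := hball (by
      rwa [mem_ball, dist_eq_norm, add_sub_cancel_left, norm_smul])
    have hy : r (p + t • (w - p)) = ψ θ :=
      (hfib _ hyD).2 (by rw [map_add, map_smul, smul_eq_mul, heq])
    rwa [hr.apply_add_smul_sub hpD hw hp hyD, hp] at hy
  calc ‖L w - L (ψ θ)‖ * d ≤ (‖L (w - p)‖ + ‖L p - L (ψ θ)‖) * d := by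
        gcongr
        rw [map_sub]
        exact (norm_sub_le_norm_sub_add_norm_sub _ (L p) _)
    _ ≤ ‖L (ψ θ) - L p‖ * ‖w - p‖ + ‖L (ψ θ) - L p‖ * d := by
        rw [add_mul, norm_sub_rev (L p)]
        gcongr
    _ ≤ ‖ψ θ - p‖ * (‖w - p‖ + d) := by
        rw [← mul_add, ← map_sub]
        gcongr
        exact hLle _

lemma image_eq (hr : IsLempertProjection D ψ r) (hψ : MapsTo ψ uDisc D) :
    r '' D = ψ '' uDisc := by
  refine hr.2.1.image_subset.antisymm ?_
  rintro _ ⟨ζ, hζ, rfl⟩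
  exact ⟨ψ ζ, hψ hζ, hr.2.2.2.1 ζ hζ⟩

end IsLempertProjection

section Limit

variable {D : Set E} {φseq : ℕ → ℂ → E} {φ : ℂ → E} {ρseq : ℕ → E → E} {ρ : E → E}

lemma exists_lt_one_eventually_norm_le (hDo : IsOpen D) (hDc : Convex ℝ D)
    (hgeo : ∀ j, IsComplexGeodesic D (φseq j)) (hρ : ∀ j, IsLempertProjection D (φseq j) (ρseq j))
    {w : E} (hw : w ∈ D) (hφ0 : Tendsto (fun j => φseq j 0) atTop (𝓝 w)) {z : E} (hz : z ∈ D) :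
    ∃ r < 1, ∀ᶠ j in atTop, ∀ η ∈ uDisc, φseq j η = ρseq j z → ‖η‖ ≤ r := by
  obtain ⟨B, δ, hδ, hB⟩ := exists_forall_kDist_map_le hDo hDc hz hw
  refine ⟨Real.tanh B, Real.tanh_lt_one B, ?_⟩
  filter_upwards [hφ0 (ball_mem_nhds w hδ)] with j hj η hη hηz
  apply norm_le_tanh_of_pDist_le hη
  have := hB _ hj (ρseq j) (hρ j).1 ((hρ j).mapsTo (hgeo j).2.1)
  rwa [(hρ j).2.2.2.1 0 zero_mem_uDisc, ← hηz, (hgeo j).2.2 η hη 0 zero_mem_uDisc] at this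

lemma limit_apply_mem_image (hDo : IsOpen D) (hDc : Convex ℝ D)
    (hgeo : ∀ j, IsComplexGeodesic D (φseq j)) (hφ : IsComplexGeodesic D φ)
    (hconv : TendstoLocallyUniformlyOn φseq φ atTop uDisc)
    (hρ : ∀ j, IsLempertProjection D (φseq j) (ρseq j))
    (hρconv : TendstoLocallyUniformlyOn ρseq ρ atTop D) {z : E} (hz : z ∈ D) :
    ρ z ∈ φ '' uDisc := by
  choose η hη hηz using fun j => (hρ j).2.1 hz
  obtain ⟨r, hr1, hr⟩ := exists_lt_one_eventually_norm_le hDo hDc hgeo hρ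
    (hφ.2.1 zero_mem_uDisc) (hconv.tendsto_at zero_mem_uDisc) hz
  obtain ⟨ζ, hζr, s, hs, hηs⟩ := (isCompact_closedBall (0 : ℂ) r).tendsto_subseq'
    (hr.mono fun j hj => mem_closedBall_zero_iff.2 (hj _ (hη j) (hηz j))).frequently
  have hζ : ζ ∈ uDisc := mem_uDisc_iff.2 ((mem_closedBall_zero_iff.1 hζr).trans_lt hr1)
  refine ⟨ζ, hζ, tendsto_nhds_unique ?_ ((hρconv.tendsto_at hz).comp hs.tendsto_atTop)⟩
  simpa [Function.comp_def, hηz] using (hconv.comp_tendsto hs.tendsto_atTop).tendsto_comp_of_isOpen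
    isOpen_ball hφ.1.continuousOn hζ hηs

lemma limit_apply_geodesic_eq (hDo : IsOpen D) (hφ : MapsTo φ uDisc D)
    (hconv : TendstoLocallyUniformlyOn φseq φ atTop uDisc)
    (hρ : ∀ j, IsLempertProjection D (φseq j) (ρseq j))
    (hρconv : TendstoLocallyUniformlyOn ρseq ρ atTop D) (hρc : ContinuousOn ρ D)
    {ζ : ℂ} (hζ : ζ ∈ uDisc) : ρ (φ ζ) = φ ζ :=
  tendsto_nhds_unique (hρconv.tendsto_comp_of_isOpen hDo hρc (hφ hζ) (hconv.tendsto_at hζ))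
    ((hconv.tendsto_at hζ).congr fun j => ((hρ j).2.2.2.1 ζ hζ).symm)

lemma limit_functional_apply_eq_of_tendsto {ζ : ℂ} {x : E} {L : ℕ → E →L[ℂ] ℂ} {Λ : E →L[ℂ] ℂ}
    (hDo : IsOpen D) (hρ : ∀ j, IsLempertProjection D (φseq j) (ρseq j))
    (hφζ : Tendsto (fun j => φseq j ζ) atTop (𝓝 x)) (hx : x ∈ D) (hL : ∀ j, ‖L j‖ ≤ 1)
    (hLfib : ∀ j, ∀ y ∈ D, ρseq j y = φseq j ζ ↔ L j y = L j (φseq j ζ))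
    (hLΛ : Tendsto L atTop (𝓝 Λ)) {w : E} (hw : w ∈ D)
    (hρw : Tendsto (fun j => ρseq j w) atTop (𝓝 x)) : Λ w = Λ x := by
  obtain ⟨d, hd, hball⟩ := Metric.isOpen_iff.1 hDo x hx
  have hest : ∀ᶠ j in atTop, ‖L j w - L j (φseq j ζ)‖ * (d / 2) ≤
      ‖φseq j ζ - ρseq j w‖ * (‖w - ρseq j w‖ + d / 2) := by
    filter_upwards [hρw (ball_mem_nhds x (half_pos hd))] with j hj
    refine (hρ j).norm_sub_mul_le (hL j) (hLfib j) hw (half_pos hd)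
      ((ball_subset_ball' ?_).trans hball)
    linarith [mem_ball.1 hj]
  have hlhs : Tendsto (fun j => ‖L j w - L j (φseq j ζ)‖ * (d / 2)) atTop
      (𝓝 (‖Λ w - Λ x‖ * (d / 2))) :=
    ((tendsto_clm_apply hLΛ tendsto_const_nhds).sub (tendsto_clm_apply hLΛ hφζ)).norm.mul_const _
  have hrhs : Tendsto (fun j => ‖φseq j ζ - ρseq j w‖ * (‖w - ρseq j w‖ + d / 2)) atTop (𝓝 0) := by
    simpa using (hφζ.sub hρw).norm.mul ((tendsto_const_nhds.sub hρw).norm.add_const (d / 2))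
  have hle := le_of_tendsto_of_tendsto hlhs hrhs hest
  exact sub_eq_zero.1 (norm_le_zero_iff.1 (nonpos_of_mul_nonpos_left hle (half_pos hd)))

lemma limit_apply_eq_of_apply_eq {ζ : ℂ} {x : E} {L : ℕ → E →L[ℂ] ℂ} {Λ : E →L[ℂ] ℂ}
    (hDo : IsOpen D) (hρconv : TendstoLocallyUniformlyOn ρseq ρ atTop D) (hρc : ContinuousOn ρ D)
    (hφζ : Tendsto (fun j => φseq j ζ) atTop (𝓝 x))
    (hLfib : ∀ j, ∀ y ∈ D, ρseq j y = φseq j ζ ↔ L j y = L j (φseq j ζ))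
    (hLΛ : Tendsto L atTop (𝓝 Λ)) (hΛ : Λ ≠ 0) {w : E} (hw : w ∈ D) (hΛw : Λ w = Λ x) :
    ρ w = x := by
  obtain ⟨v, hv⟩ : ∃ v, Λ v = 1 := by
    obtain ⟨v, hv⟩ : ∃ v, Λ v ≠ 0 := by
      by_contra! h
      exact hΛ (ContinuousLinearMap.ext h)
    exact ⟨(Λ v)⁻¹ • v, by simp [hv]⟩
  set t : ℕ → ℂ := fun j => (L j (φseq j ζ) - L j w) / L j v
  have hLv : Tendsto (fun j => L j v) atTop (𝓝 1) := hv ▸ tendsto_clm_apply hLΛ tendsto_const_nhds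
  have ht : Tendsto t atTop (𝓝 0) := by
    have := ((tendsto_clm_apply hLΛ hφζ).sub
      (tendsto_clm_apply hLΛ (tendsto_const_nhds (x := w)))).div hLv one_ne_zero
    rwa [hΛw, sub_self, zero_div] at this
  have hwt : Tendsto (fun j => w + t j • v) atTop (𝓝 w) := by
    simpa using tendsto_const_nhds.add (ht.smul_const v)
  have hfib : ∀ᶠ j in atTop, ρseq j (w + t j • v) = φseq j ζ := by
    filter_upwards [hwt (hDo.mem_nhds hw), hLv.eventually_ne one_ne_zero] with j hjD hjv
    rw [hLfib j _ hjD, map_add, map_smul, smul_eq_mul, div_mul_cancel₀ _ hjv]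
    ring
  exact tendsto_nhds_unique (hρconv.tendsto_comp_of_isOpen hDo hρc hw hwt)
    (hφζ.congr' (hfib.mono fun j hj => hj.symm))

variable [FiniteDimensional ℂ E]

lemma exists_limit_fiber_eq (hDo : IsOpen D) (hgeo : ∀ j, IsComplexGeodesic D (φseq j))
    (hφ : MapsTo φ uDisc D) (hconv : TendstoLocallyUniformlyOn φseq φ atTop uDisc)
    (hρ : ∀ j, IsLempertProjection D (φseq j) (ρseq j))
    (hρconv : TendstoLocallyUniformlyOn ρseq ρ atTop D) (hρc : ContinuousOn ρ D)
    {ζ : ℂ} (hζ : ζ ∈ uDisc) :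
    ∃ (L : E →ₗ[ℂ] ℂ) (c : ℂ), L ≠ 0 ∧ {w ∈ D | ρ w = φ ζ} = {w ∈ D | L w = c} := by
  choose L hL hLfib using fun j => (hρ j).exists_norm_eq_one (hgeo j).2.1 hζ
  obtain ⟨Λ, hΛ, s, hs, hLΛ⟩ := (isCompact_sphere (0 : E →L[ℂ] ℂ) 1).tendsto_subseq
    fun j => mem_sphere_zero_iff_norm.2 (hL j)
  have hΛ0 : Λ ≠ 0 := ne_zero_of_mem_sphere one_ne_zero ⟨Λ, hΛ⟩
  have hφζ : Tendsto (fun k => φseq (s k) ζ) atTop (𝓝 (φ ζ)) :=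
    (hconv.tendsto_at hζ).comp hs.tendsto_atTop
  refine ⟨Λ, Λ (φ ζ), fun h => hΛ0 (ContinuousLinearMap.coe_injective h),
    Set.ext fun w => ⟨fun ⟨hw, hρw⟩ => ⟨hw, ?_⟩, fun ⟨hw, hΛw⟩ => ⟨hw, ?_⟩⟩⟩
  · exact limit_functional_apply_eq_of_tendsto hDo (fun k => hρ (s k)) hφζ (hφ hζ)
      (fun k => (hL (s k)).le) (fun k => hLfib (s k)) hLΛ hw
      (hρw ▸ (hρconv.tendsto_at hw).comp hs.tendsto_atTop)
  · exact limit_apply_eq_of_apply_eq hDo (hρconv.comp_tendsto hs.tendsto_atTop) hρc hφζ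
      (fun k => hLfib (s k)) hLΛ hΛ0 hw hΛw

theorem isLempertProjection_of_tendstoLocallyUniformlyOn (hDo : IsOpen D) (hDc : Convex ℝ D)
    (hgeo : ∀ j, IsComplexGeodesic D (φseq j)) (hφ : IsComplexGeodesic D φ)
    (hconv : TendstoLocallyUniformlyOn φseq φ atTop uDisc)
    (hρ : ∀ j, IsLempertProjection D (φseq j) (ρseq j))
    (hρconv : TendstoLocallyUniformlyOn ρseq ρ atTop D) : IsLempertProjection D φ ρ := by
  have hρd : DifferentiableOn ℂ ρ D :=
    hρconv.differentiableOn_of_finiteDimensional hDo fun j => (hρ j).1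
  have hfix : ∀ ζ ∈ uDisc, ρ (φ ζ) = φ ζ := fun ζ hζ =>
    limit_apply_geodesic_eq hDo hφ.2.1 hconv hρ hρconv hρd.continuousOn hζ
  have hmaps : MapsTo ρ D (φ '' uDisc) := fun z hz =>
    limit_apply_mem_image hDo hDc hgeo hφ hconv hρ hρconv hz
  refine ⟨hρd, hmaps, fun z hz => ?_, hfix, fun ζ hζ =>
    exists_limit_fiber_eq hDo hgeo hφ.2.1 hconv hρ hρconv hρd.continuousOn hζ⟩
  obtain ⟨ζ, hζ, hζz⟩ := hmaps hz
  rw [← hζz, hfix ζ hζ]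

end Limit

theorem stmt9_general {n : ℕ} (D : Set (EuclideanSpace ℂ (Fin n)))
    (hDo : IsOpen D) (hDconv : Convex ℝ D)
    (φseq : ℕ → ℂ → EuclideanSpace ℂ (Fin n))
    (hgeo : ∀ j, IsComplexGeodesic D (φseq j))
    (φ : ℂ → EuclideanSpace ℂ (Fin n))
    (hφ : IsComplexGeodesic D φ)
    (hconv : TendstoLocallyUniformlyOn φseq φ atTop uDisc)
    (ρseq : ℕ → EuclideanSpace ℂ (Fin n) → EuclideanSpace ℂ (Fin n))
    (hρ : ∀ j, IsLempertProjection D (φseq j) (ρseq j))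
    (ρ : EuclideanSpace ℂ (Fin n) → EuclideanSpace ℂ (Fin n))
    (hρconv : TendstoLocallyUniformlyOn ρseq ρ atTop D) :
    IsLempertProjection D φ ρ ∧ ρ '' D = φ '' uDisc := by
  have h := isLempertProjection_of_tendstoLocallyUniformlyOn hDo hDconv hgeo hφ hconv hρ hρconv
  exact ⟨h, h.image_eq hφ.2.1⟩

/-- a limit of Lempert projections associated to converging complex
geodesics is a Lempert projection associated to the limit geodesic. -/
theorem stmt9 {n : ℕ} (D : Set (EuclideanSpace ℂ (Fin n)))
    (hDo : IsOpen D) (hDb : Bornology.IsBounded D) (hDconv : Convex ℝ D)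
    (φseq : ℕ → ℂ → EuclideanSpace ℂ (Fin n))
    (hgeo : ∀ j, IsComplexGeodesic D (φseq j))
    (φ : ℂ → EuclideanSpace ℂ (Fin n))
    (hφ : IsComplexGeodesic D φ)
    (hconv : TendstoLocallyUniformlyOn φseq φ atTop uDisc)
    (ρseq : ℕ → EuclideanSpace ℂ (Fin n) → EuclideanSpace ℂ (Fin n))
    (hρ : ∀ j, IsLempertProjection D (φseq j) (ρseq j))
    (ρ : EuclideanSpace ℂ (Fin n) → EuclideanSpace ℂ (Fin n))
    (hρconv : TendstoLocallyUniformlyOn ρseq ρ atTop D) :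
    IsLempertProjection D φ ρ ∧ ρ '' D = φ '' uDisc :=
  stmt9_general D hDo hDconv φseq hgeo φ hφ hconv ρseq hρ ρ hρconv
end
end
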